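/- arXiv:0902.2497 — 3 statements merged into one kernel-verified Lean document; each statement's English description precedes it below -/
import Mathlib

section
/- Let e ≥ 2, and let λ be a partition that is an e-core. Fix a residue x ∈ ℤ/eℤ (with node (i,j) having residue j - i + v mod e for a fixed charge v ∈ ℤ/eℤ). Then λ does not simultaneously have a removable x-node and an addable x-node. -/
open Finset

/-- An `r`-multipartition: a tuple of finitely supported weakly decreasing
sequences of naturals (rows are 0-based). -/
structure MultiPartition (r : ℕ) where
  part : Fin r → ℕ →₀ ℕ
  mono : ∀ s i, part s (i + 1) ≤ part s i

namespace MultiPartition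

variable {r e : ℕ}

/-- total number of nodes -/
def size (l : MultiPartition r) : ℕ := ∑ s, (l.part s).sum fun _ v => v

/-- a position: (component, row), both 0-based -/
abbrev Pos (r : ℕ) := Fin r × ℕ

/-- `Below p q` : the position `p` is strictly below `q`
(larger component index, or equal component and larger row). -/
def Below (p q : Pos r) : Prop := q.1 < p.1 ∨ (p.1 = q.1 ∧ q.2 < p.2)

/-- row `p.2` of component `p.1` carries a removable node -/
def Removable (l : MultiPartition r) (p : Pos r) : Prop :=
  l.part p.1 (p.2 + 1) < l.part p.1 p.2

/-- row `p.2` of component `p.1` carries an addable node -/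
def Addable (l : MultiPartition r) (p : Pos r) : Prop :=
  p.2 = 0 ∨ l.part p.1 p.2 < l.part p.1 (p.2 - 1)

/-- residue of the node in row `i`, column `j` (0-based) of component `s`:
`j - i + v s` in `ZMod e` (for `e = 0` this is `ℤ`). -/
def resNode (v : Fin r → ZMod e) (s : Fin r) (i j : ℕ) : ZMod e :=
  (j : ZMod e) - (i : ZMod e) + v s

/-- residue of the removable node in row `p` -/
def resRem (v : Fin r → ZMod e) (l : MultiPartition r) (p : Pos r) : ZMod e :=
  resNode v p.1 p.2 (l.part p.1 p.2 - 1)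

/-- residue of the addable node in row `p` -/
def resAdd (v : Fin r → ZMod e) (l : MultiPartition r) (p : Pos r) : ZMod e :=
  resNode v p.1 p.2 (l.part p.1 p.2)

/-- `p` is a normal `x`-node of `l`: it is a removable `x`-node, and for every
addable `x`-node `q` below it, there are strictly more removable `x`-nodes than
addable `x`-nodes strictly between `q` and `p`. -/
def Normal (v : Fin r → ZMod e) (l : MultiPartition r) (p : Pos r) (x : ZMod e) : Prop :=
  Removable l p ∧ resRem v l p = x ∧
  ∀ q : Pos r, Addable l q → resAdd v l q = x → Below q p →
    {q' : Pos r | Removable l q' ∧ resRem v l q' = x ∧ Below q' p ∧ Below q q'}.ncard >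
    {q' : Pos r | Addable l q' ∧ resAdd v l q' = x ∧ Below q' p ∧ Below q q'}.ncard

/-- the good `x`-node: the highest normal `x`-node -/
def Good (v : Fin r → ZMod e) (l : MultiPartition r) (p : Pos r) (x : ZMod e) : Prop :=
  Normal v l p x ∧ ∀ q, Normal v l q x → ¬ Below p q

/-- `m` is obtained from `l` by adding one node at the end of row `p.2` of
component `p.1`. -/
def AddNode (l m : MultiPartition r) (p : Pos r) : Prop :=
  (∀ s, s ≠ p.1 → m.part s = l.part s) ∧
  (∀ i, i ≠ p.2 → m.part p.1 i = l.part p.1 i) ∧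
  m.part p.1 p.2 = l.part p.1 p.2 + 1

/-- the empty multipartition -/
def IsEmptyMP (l : MultiPartition r) : Prop := ∀ s, l.part s = 0

/-- Kleshchev multipartitions with respect to `(e; v)`: defined recursively by
adding good nodes. -/
inductive Kleshchev (v : Fin r → ZMod e) : MultiPartition r → Prop
  | empty (l : MultiPartition r) : IsEmptyMP l → Kleshchev v l
  | step (l m : MultiPartition r) (p : Pos r) (x : ZMod e) :
      Kleshchev v l → AddNode l m p → Good v m p x → Kleshchev v m

/-- a semi-ladder node: a removable node with no lower addable node of the
same residue -/
def SemiLadder (v : Fin r → ZMod e) (l : MultiPartition r) (p : Pos r) : Prop :=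
  Removable l p ∧ ∀ q, Addable l q → resAdd v l q = resRem v l p → ¬ Below q p

/-- a ladder node: a semi-ladder node with no higher semi-ladder node of the
same residue -/
def LadderNode (v : Fin r → ZMod e) (l : MultiPartition r) (p : Pos r) : Prop :=
  SemiLadder v l p ∧
  ∀ q, SemiLadder v l q → resRem v l q = resRem v l p → ¬ Below p q

/-- `m` is obtained from `l` by removing all the nodes of the ladder
`x`-sequence of `l` (i.e. all semi-ladder `x`-nodes of `l`, which is required
to be nonempty). -/
def RemoveLadderSeq (v : Fin r → ZMod e) (l m : MultiPartition r) (x : ZMod e) : Prop :=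
  (∃ p, SemiLadder v l p ∧ resRem v l p = x) ∧
  ∀ s i, (SemiLadder v l (s, i) ∧ resRem v l (s, i) = x →
            m.part s i = l.part s i - 1) ∧
         (¬ (SemiLadder v l (s, i) ∧ resRem v l (s, i) = x) →
            m.part s i = l.part s i)

/-- strong ladder multipartitions: obtained from the empty multipartition by
successively adding whole ladder sequences -/
inductive StrongLadder (v : Fin r → ZMod e) : MultiPartition r → Prop
  | empty (l : MultiPartition r) : IsEmptyMP l → StrongLadder v l
  | step (l m : MultiPartition r) (x : ZMod e) :
      StrongLadder v l → RemoveLadderSeq v m l x → StrongLadder v m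

/-- ladder multipartitions: obtained from the empty multipartition by
successively adding single ladder nodes -/
inductive Ladder (v : Fin r → ZMod e) : MultiPartition r → Prop
  | empty (l : MultiPartition r) : IsEmptyMP l → Ladder v l
  | step (l m : MultiPartition r) (p : Pos r) :
      Ladder v l → AddNode l m p → LadderNode v m p → Ladder v m

/-- the dominance order on multipartitions -/
def Dominates (l m : MultiPartition r) : Prop :=
  ∀ s : Fin r, ∀ i : ℕ,
    ((∑ a ∈ Finset.univ.filter (fun a => a < s), (l.part a).sum fun _ v => v) +
      ∑ j ∈ Finset.range i, l.part s j) ≥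
    ((∑ a ∈ Finset.univ.filter (fun a => a < s), (m.part a).sum fun _ v => v) +
      ∑ j ∈ Finset.range i, m.part s j)

/-- the order `≺` of Definition 3.6 -/
def Prec (l m : MultiPartition r) : Prop :=
  ∃ s : Fin r, ∃ t : ℕ,
    (∀ j, s < j → l.part j = m.part j) ∧
    (∀ j, t < j → l.part s j = m.part s j) ∧
    l.part s t < m.part s t

/-- hook length at the node in row `i`, column `j` (0-based) of a partition `f` -/
noncomputable def hookLen (f : ℕ →₀ ℕ) (i j : ℕ) : ℕ :=
  (f i - j) + {k : ℕ | i < k ∧ j < f k}.ncard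

/-- an `e`-core: a partition having no hook of length `e`
(for `e = 0` every partition is a `0`-core) -/
def ECore (e : ℕ) (f : ℕ →₀ ℕ) : Prop :=
  ∀ i j, j < f i → hookLen f i j ≠ e

/-- `e`-restricted partitions (every partition is `0`-restricted) -/
def ERestricted (e : ℕ) (f : ℕ →₀ ℕ) : Prop :=
  ∀ i, e ≠ 0 → f i - f (i + 1) < e

end MultiPartition

open MultiPartition

/-!
Encode a partition `f` by its beta-numbers `β k = f k - k`, a strictly decreasing sequence.
A removable node in row `a` means `β a - 1` is not a beta-number, an addable node in row `b`
means `β b + 1` is not one, and the residues of these nodes are `β a - 1` and `β b` modulo `e`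
(up to the charge). If `c = β i - e` is not a beta-number and `t` is the first row with
`β t < c`, the hook at the node `(i, c + t - 1)` has its leg in rows `i + 1, …, t - 1` and
length `e`; so the beta-numbers of an `e`-core are closed under subtracting `e`. When the two
residues agree, either `β a - 1 ≤ β b` or `β b + 1 ≤ β a`, and both differences are multiples
of `e`: closure under subtracting `e` fills the corresponding gap, a contradiction.
-/

namespace MultiPartition

def beta (f : ℕ →₀ ℕ) (k : ℕ) : ℤ := f k - k

section Beta

variable {f : ℕ →₀ ℕ}

theorem beta_add_le_beta_add (hf : Antitone f) {k k' : ℕ} (h : k ≤ k') :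
    beta f k' + k' ≤ beta f k + k := by
  simpa [beta] using hf h

theorem beta_strictAnti (hf : Antitone f) : StrictAnti (beta f) := fun k k' h => by
  have := beta_add_le_beta_add hf h.le
  have : (k : ℤ) < k' := by exact_mod_cast h
  linarith

theorem exists_beta_lt (hf : Antitone f) (c : ℤ) : ∃ k, beta f k < c := by
  refine ⟨(beta f 0 - c + 1).toNat, ?_⟩
  have := beta_add_le_beta_add hf (Nat.zero_le (beta f 0 - c + 1).toNat)
  have := Int.self_le_toNat (beta f 0 - c + 1)
  push_cast at *
  linarith

theorem beta_ne_of_lt_of_lt (hf : Antitone f) {a : ℕ} {c : ℤ}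
    (h₁ : beta f (a + 1) < c) (h₂ : c < beta f a) (k : ℕ) : beta f k ≠ c := by
  rcases le_or_gt k a with hk | hk
  · exact ((beta_strictAnti hf).antitone hk |>.trans_lt' h₂).ne'
  · exact ((beta_strictAnti hf).antitone hk |>.trans_lt h₁).ne

theorem hookLen_eq_of_forall_lt_iff {i j t : ℕ} (hj : ∀ k, j < f k ↔ k < t) :
    hookLen f i j = f i - j + (t - (i + 1)) := by
  have hleg : {k | i < k ∧ j < f k} = ↑(Finset.Ico (i + 1) t) := by
    ext k
    simp only [Set.mem_ofPred_eq, hj, Finset.coe_Ico, Set.mem_Ico]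
    omega
  rw [hookLen, hleg, Set.ncard_coe_finset, Nat.card_Ico]

theorem exists_hookLen_eq_of_beta_ne (hf : Antitone f) {i : ℕ} {c : ℤ} (hci : c < beta f i)
    (hc : ∀ k, beta f k ≠ c) : ∃ j < f i, (hookLen f i j : ℤ) = beta f i - c := by
  classical
  have hex := exists_beta_lt hf c
  set t := Nat.find hex
  have ht : beta f t < c := Nat.find_spec hex
  have hit : i < t := by
    by_contra! h
    linarith [(beta_strictAnti hf).antitone h]
  have ht₁ : c < beta f (t - 1) :=
    lt_of_le_of_ne (not_lt.1 (Nat.find_min hex (by omega))) (hc _).symm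
  obtain ⟨j, hj⟩ : ∃ j : ℕ, (j : ℤ) = c + t - 1 :=
    ⟨(c + t - 1).toNat, Int.toNat_of_nonneg (by simp only [beta] at ht; omega)⟩
  have hjt : ∀ k, j < f k ↔ k < t := by
    have h₁ : f t ≤ j := by simp only [beta] at ht; omega
    have h₂ : j < f (t - 1) := by simp only [beta] at ht₁; omega
    refine fun k => ⟨fun hk => ?_, fun hk => h₂.trans_le (hf (by omega))⟩
    by_contra! h
    exact (hk.trans_le (hf h)).not_ge h₁
  have hji := (hjt i).2 hit
  refine ⟨j, hji, ?_⟩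
  rw [hookLen_eq_of_forall_lt_iff hjt, beta]
  omega

end Beta

namespace ECore

variable {e : ℕ} {f : ℕ →₀ ℕ}

theorem exists_beta_eq_sub (hcore : ECore e f) (hf : Antitone f) (i : ℕ) :
    ∃ k, beta f k = beta f i - e := by
  by_contra! h
  have he : (0 : ℤ) < e := by
    rcases Nat.eq_zero_or_pos e with rfl | he
    · exact absurd (by simp) (h i)
    · exact_mod_cast he
  obtain ⟨j, hj, hhook⟩ := exists_hookLen_eq_of_beta_ne hf (by linarith) h
  exact hcore i j hj (by exact_mod_cast hhook.trans (sub_sub_cancel _ _))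

theorem exists_beta_eq_sub_mul (hcore : ECore e f) (hf : Antitone f) (i n : ℕ) :
    ∃ k, beta f k = beta f i - n * e := by
  induction n with
  | zero => exact ⟨i, by simp⟩
  | succ n ih =>
    obtain ⟨k, hk⟩ := ih
    obtain ⟨k', hk'⟩ := hcore.exists_beta_eq_sub hf k
    exact ⟨k', by rw [hk', hk]; push_cast; ring⟩

theorem exists_beta_eq_of_dvd (hcore : ECore e f) (hf : Antitone f) {i : ℕ} {c : ℤ}
    (hc : c ≤ beta f i) (hdvd : (e : ℤ) ∣ beta f i - c) : ∃ k, beta f k = c := by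
  obtain ⟨n, hn⟩ := hdvd
  rcases Nat.eq_zero_or_pos e with rfl | he
  · exact ⟨i, by simp only [Nat.cast_zero, zero_mul] at hn; linarith⟩
  have hn₀ : 0 ≤ n :=
    (mul_nonneg_iff_of_pos_left (by exact_mod_cast he)).1 (hn ▸ sub_nonneg.2 hc)
  lift n to ℕ using hn₀
  obtain ⟨k, hk⟩ := hcore.exists_beta_eq_sub_mul hf i n
  exact ⟨k, by rw [hk]; linarith⟩

end ECore

variable {r e : ℕ}

theorem antitone_part (l : MultiPartition r) (s : Fin r) : Antitone (l.part s) :=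
  antitone_nat_of_succ_le (l.mono s)

theorem Removable.beta_sub_one_ne {l : MultiPartition r} {p : Pos r} (h : Removable l p)
    (k : ℕ) : beta (l.part p.1) k ≠ beta (l.part p.1) p.2 - 1 := by
  refine beta_ne_of_lt_of_lt (l.antitone_part p.1) ?_ (by linarith) k
  have : l.part p.1 (p.2 + 1) < l.part p.1 p.2 := h
  simp only [beta]
  push_cast
  omega

theorem Addable.beta_add_one_ne {l : MultiPartition r} {p : Pos r} (h : Addable l p)
    (k : ℕ) : beta (l.part p.1) k ≠ beta (l.part p.1) p.2 + 1 := by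
  have hf := l.antitone_part p.1
  rcases h with h | h
  · have := (beta_strictAnti hf).antitone (Nat.zero_le k)
    rw [h]
    exact (this.trans_lt (lt_add_one _)).ne
  · obtain ⟨a, ha⟩ := Nat.exists_eq_add_one_of_ne_zero (n := p.2) fun h₀ => by simp [h₀] at h
    rw [ha, Nat.add_sub_cancel] at h
    rw [ha]
    refine beta_ne_of_lt_of_lt hf (lt_add_one _) ?_ k
    simp only [beta]
    push_cast
    omega

theorem resRem_eq {l : MultiPartition r} {p : Pos r} (h : Removable l p) (v : Fin r → ZMod e) :
    resRem v l p = ((beta (l.part p.1) p.2 - 1 : ℤ) : ZMod e) + v p.1 := by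
  have : 1 ≤ l.part p.1 p.2 := Nat.one_le_of_lt h
  simp only [resRem, resNode, beta, Nat.cast_sub this]
  push_cast
  ring

theorem resAdd_eq (l : MultiPartition r) (p : Pos r) (v : Fin r → ZMod e) :
    resAdd v l p = ((beta (l.part p.1) p.2 : ℤ) : ZMod e) + v p.1 := by
  simp [resAdd, resNode, beta]

end MultiPartition

theorem ecore_not_removable_and_addable_general {e : ℕ}
    (v : Fin 1 → ZMod e) (l : MultiPartition 1)
    (hcore : ECore e (l.part 0)) (x : ZMod e) :
    ¬ ((∃ i : ℕ, Removable l (0, i) ∧ resRem v l (0, i) = x) ∧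
       (∃ i : ℕ, Addable l (0, i) ∧ resAdd v l (0, i) = x)) := by
  rintro ⟨⟨a, hrem, rfl⟩, b, hadd, hres⟩
  have hf := l.antitone_part 0
  have hdvd : (e : ℤ) ∣ beta (l.part 0) a - 1 - beta (l.part 0) b := by
    rw [resAdd_eq, resRem_eq hrem] at hres
    exact (ZMod.intCast_eq_intCast_iff_dvd_sub _ _ _).1 (add_right_cancel hres)
  rcases le_total (beta (l.part 0) a - 1) (beta (l.part 0) b) with hab | hab
  · obtain ⟨k, hk⟩ := hcore.exists_beta_eq_of_dvd hf hab (dvd_sub_comm.1 hdvd)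
    exact hrem.beta_sub_one_ne k hk
  · obtain ⟨k, hk⟩ := hcore.exists_beta_eq_of_dvd hf (c := beta (l.part 0) b + 1)
      (by linarith) (by convert hdvd using 1; ring)
    exact hadd.beta_add_one_ne k hk

/-- an `e`-core (viewed as a `1`-partition, with charge `v`) does not
have simultaneously a removable `x`-node and an addable `x`-node. -/
theorem ecore_not_removable_and_addable {e : ℕ} (he : 2 ≤ e)
    (v : Fin 1 → ZMod e) (l : MultiPartition 1)
    (hcore : ECore e (l.part 0)) (x : ZMod e) :
    ¬ ((∃ i : ℕ, Removable l (0, i) ∧ resRem v l (0, i) = x) ∧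
       (∃ i : ℕ, Addable l (0, i) ∧ resAdd v l (0, i) = x)) :=
  ecore_not_removable_and_addable_general v l hcore x
end

section
/- Let e = 0 or e ≥ 2, r ≥ 1, and Q = (v₁,...,v_r) ∈ (ℤ/eℤ)ʳ. If λ is a nonempty Kleshchev r-partition of n with respect to (e;Q), then λ has at least one ladder node. (Equivalently: the lowest removable node α of λ is a semi-ladder node, i.e., λ has no addable node of residue res(α) below α.) -/
open Finset

open MultiPartition

/-!
The lowest removable node of a Kleshchev multipartition is a semi-ladder node, by induction along
the chain of good nodes building it. If the last node `p` added is the lowest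
removable node, there is no removable node below it, so normality of `p` leaves no room for an
addable node of its residue below it. Otherwise the lowest removable node `α` lies below `p`, and
adding `p` changes no row at or below `α`, so the semi-ladder property of `α` passes from the
smaller multipartition. A semi-ladder node then yields a ladder node: the highest
semi-ladder node of the same residue.
-/

namespace MultiPartition

variable {r e : ℕ}

lemma below_iff_toLex_lt {p q : Pos r} : Below p q ↔ toLex q < toLex p := by
  rw [Prod.Lex.lt_iff, Below, Fin.ext_iff, Fin.ext_iff, eq_comm]
  rfl

lemma Below.trans {p q s : Pos r} (hpq : Below p q) (hqs : Below q s) : Below p s :=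
  below_iff_toLex_lt.2 ((below_iff_toLex_lt.1 hqs).trans (below_iff_toLex_lt.1 hpq))

lemma Below.irrefl (p : Pos r) : ¬ Below p p := fun h => lt_irrefl _ (below_iff_toLex_lt.1 h)

lemma below_next_row (p : Pos r) : Below (p.1, p.2 + 1) p := Or.inr ⟨rfl, Nat.lt_succ_self _⟩

lemma below_or_eq_or_above (p q : Pos r) : Below p q ∨ p = q ∨ Below q p := by
  simp only [below_iff_toLex_lt]
  rcases lt_trichotomy (toLex q) (toLex p) with h | h | h
  · exact Or.inl h
  · exact Or.inr (Or.inl (toLex.injective h).symm)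
  · exact Or.inr (Or.inr h)

lemma Below.prev_row_below {q α p : Pos r} (hqα : Below q α) (hαp : Below α p) :
    Below (q.1, q.2 - 1) p := by
  rcases hqα with hlt | ⟨heq, hlt⟩
  · exact Below.trans (Or.inl hlt) hαp
  · rcases Nat.lt_or_ge α.2 (q.2 - 1) with h | h
    · exact Below.trans (Or.inr ⟨heq, h⟩) hαp
    · have : (q.1, q.2 - 1) = α := Prod.ext heq (by omega)
      rwa [this]

def IsLowestRemovable (l : MultiPartition r) (α : Pos r) : Prop :=
  Removable l α ∧ ∀ β, Removable l β → ¬ Below β α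

lemma IsLowestRemovable.eq_or_below {l : MultiPartition r} {α p : Pos r}
    (hα : IsLowestRemovable l α) (hp : Removable l p) : α = p ∨ Below α p := by
  rcases below_or_eq_or_above α p with h | h | h
  · exact Or.inr h
  · exact Or.inl h
  · exact absurd h (hα.2 p hp)

lemma removable_finite (l : MultiPartition r) : {p : Pos r | Removable l p}.Finite := by
  refine (Set.finite_univ.prod
    (Set.finite_iUnion fun s => (l.part s).support.finite_toSet)).subset ?_
  rintro ⟨s, i⟩ (hp : l.part s (i + 1) < l.part s i)
  refine ⟨Set.mem_univ _, Set.mem_iUnion.2 ⟨s, ?_⟩⟩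
  simp only [Finset.mem_coe, Finsupp.mem_support_iff]
  omega

lemma exists_removable {l : MultiPartition r} (hne : ¬ IsEmptyMP l) :
    ∃ p : Pos r, Removable l p := by
  obtain ⟨s, hs⟩ : ∃ s, l.part s ≠ 0 := by simpa [IsEmptyMP] using hne
  have hsupp : (l.part s).support.Nonempty := Finsupp.support_nonempty_iff.2 hs
  set i := (l.part s).support.max' hsupp
  have hlast : l.part s i ≠ 0 := Finsupp.mem_support_iff.1 ((l.part s).support.max'_mem hsupp)
  have hnext : l.part s (i + 1) = 0 := by
    by_contra h
    have := (l.part s).support.le_max' _ (Finsupp.mem_support_iff.2 h)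
    omega
  exact ⟨(s, i), show l.part s (i + 1) < l.part s i by omega⟩

lemma exists_isLowestRemovable {l : MultiPartition r} (hne : ¬ IsEmptyMP l) :
    ∃ α, IsLowestRemovable l α := by
  obtain ⟨p, hp⟩ := exists_removable hne
  obtain ⟨α, hα, hαmax⟩ :=
    (removable_finite l).exists_maximalFor (fun p : Pos r => toLex p) _ ⟨p, hp⟩
  refine ⟨α, hα, fun β hβ hβα => ?_⟩
  have hlt := below_iff_toLex_lt.1 hβα
  exact (hαmax hβ hlt.le).not_gt hlt

lemma exists_ladderNode_of_semiLadder {v : Fin r → ZMod e} {l : MultiPartition r} {p : Pos r}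
    (hp : SemiLadder v l p) : ∃ q, LadderNode v l q := by
  have hfin : {q : Pos r | SemiLadder v l q ∧ resRem v l q = resRem v l p}.Finite :=
    (removable_finite l).subset fun q hq => hq.1.1
  obtain ⟨q, ⟨hq, hqres⟩, hqmin⟩ := hfin.exists_minimalFor (fun p : Pos r => toLex p) _ ⟨p, hp, rfl⟩
  refine ⟨q, hq, fun q' hq' hres hqq' => ?_⟩
  have hlt := below_iff_toLex_lt.1 hqq'
  exact (hqmin ⟨hq', hres.trans hqres⟩ hlt.le).not_gt hlt

/-- Nothing removable lies between `p` and a lower addable node, so the count in `Normal` is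
violated. -/
lemma Normal.semiLadder {v : Fin r → ZMod e} {l : MultiPartition r} {p : Pos r} {x : ZMod e}
    (hp : Normal v l p x) (hlow : ∀ β, Removable l β → ¬ Below β p) : SemiLadder v l p := by
  obtain ⟨hrem, rfl, hcount⟩ := hp
  refine ⟨hrem, fun q hq hres hqp => ?_⟩
  have hempty : {q' : Pos r | Removable l q' ∧ resRem v l q' = resRem v l p ∧ Below q' p ∧
      Below q q'} = ∅ :=
    Set.eq_empty_of_forall_notMem fun q' hq' => hlow q' hq'.1 hq'.2.2.1
  have := hcount q hq hres hqp
  rw [hempty, Set.ncard_empty] at this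
  exact Nat.not_lt_zero _ this

namespace AddNode

variable {l m : MultiPartition r} {p : Pos r}

lemma part_eq_of_below (h : AddNode l m p) {s : Fin r} {i : ℕ} (hsi : Below (s, i) p) :
    m.part s i = l.part s i := by
  by_cases hs : s = p.1
  · subst hs
    exact h.2.1 i fun hi => Below.irrefl p (by subst hi; exact hsi)
  · rw [h.1 s hs]

lemma removable_iff (h : AddNode l m p) {a : Pos r} (ha : Below a p) :
    Removable m a ↔ Removable l a := by
  rw [Removable, Removable, h.part_eq_of_below ha,
    h.part_eq_of_below ((below_next_row a).trans ha)]

lemma addable_iff (h : AddNode l m p) {a : Pos r} (ha : Below (a.1, a.2 - 1) p) :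
    Addable m a ↔ Addable l a := by
  rcases Nat.eq_zero_or_pos a.2 with h0 | hpos
  · simp only [Addable, h0, true_or]
  · have haa : Below a p := Below.trans (q := (a.1, a.2 - 1)) (Or.inr ⟨rfl, by omega⟩) ha
    rw [Addable, Addable, h.part_eq_of_below haa, h.part_eq_of_below ha]

lemma resRem_eq (h : AddNode l m p) (v : Fin r → ZMod e) {a : Pos r} (ha : Below a p) :
    resRem v m a = resRem v l a := by
  rw [resRem, resRem, h.part_eq_of_below ha]

lemma resAdd_eq (h : AddNode l m p) (v : Fin r → ZMod e) {a : Pos r} (ha : Below a p) :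
    resAdd v m a = resAdd v l a := by
  rw [resAdd, resAdd, h.part_eq_of_below ha]

lemma isLowestRemovable_of_below (h : AddNode l m p) {α : Pos r} (hα : IsLowestRemovable m α)
    (hαp : Below α p) : IsLowestRemovable l α :=
  ⟨(h.removable_iff hαp).1 hα.1, fun β hβ hβα =>
    hα.2 β ((h.removable_iff (hβα.trans hαp)).2 hβ) hβα⟩

lemma semiLadder_of_below (h : AddNode l m p) {v : Fin r → ZMod e} {α : Pos r}
    (hα : SemiLadder v l α) (hαp : Below α p) : SemiLadder v m α := by
  refine ⟨(h.removable_iff hαp).2 hα.1, fun q hq hres hqα => hα.2 q ?_ ?_ hqα⟩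
  · exact (h.addable_iff (hqα.prev_row_below hαp)).1 hq
  · rwa [← h.resAdd_eq v (hqα.trans hαp), ← h.resRem_eq v hαp]

end AddNode

theorem Kleshchev.semiLadder_of_isLowestRemovable {v : Fin r → ZMod e} {l : MultiPartition r}
    (hK : Kleshchev v l) {α : Pos r} (hα : IsLowestRemovable l α) : SemiLadder v l α := by
  induction hK generalizing α with
  | empty l hl =>
    exact absurd hα.1 (by simp [Removable, hl α.1])
  | step l m p x _ hAdd hGood ih =>
    rcases hα.eq_or_below hGood.1.1 with rfl | hαp
    · exact hGood.1.semiLadder hα.2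
    · exact hAdd.semiLadder_of_below (ih (hAdd.isLowestRemovable_of_below hα hαp)) hαp

end MultiPartition

theorem kleshchev_has_ladder_node_general {r e : ℕ}
    (v : Fin r → ZMod e) (l : MultiPartition r)
    (hK : Kleshchev v l) (hne : ¬ IsEmptyMP l) :
    ∃ p : Pos r, LadderNode v l p := by
  obtain ⟨α, hα⟩ := exists_isLowestRemovable hne
  exact exists_ladderNode_of_semiLadder (hK.semiLadder_of_isLowestRemovable hα)

/-- a nonempty Kleshchev multipartition has at least one ladder node. -/
theorem kleshchev_has_ladder_node {r e : ℕ} (he : e = 0 ∨ 2 ≤ e)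
    (v : Fin r → ZMod e) (l : MultiPartition r)
    (hK : Kleshchev v l) (hne : ¬ IsEmptyMP l) :
    ∃ p : Pos r, LadderNode v l p :=
  kleshchev_has_ladder_node_general v l hK hne
end

section
/- Let e = 0 or e ≥ 2 and let λ be a Kleshchev r-partition of n with respect to (e; v₁,...,v_r). Then each component λ⁽ⁱ⁾ (1 ≤ i ≤ r) is an e-restricted partition, i.e., λⱼ⁽ⁱ⁾ - λⱼ₊₁⁽ⁱ⁾ < e for all j when e ≥ 2 (no condition when e = 0). -/
open Finset

open MultiPartition

/-!
Adding a good node to an `e`-restricted component can only break restrictedness by making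
some gap `λᵢ - λᵢ₊₁` equal to `e`, at the row `i` that received the node. But then the
removable node ending row `i` and the addable node ending row `i + 1` have the same residue
and nothing lies between them, so the new node is not even normal.
-/

namespace MultiPartition

variable {r e : ℕ} {v : Fin r → ZMod e} {l m : MultiPartition r} {s : Fin r} {i : ℕ}

theorem addable_succ_of_removable (h : Removable m (s, i)) : Addable m (s, i + 1) :=
  Or.inr (by simpa [Removable] using h)

theorem resRem_sub_resAdd_succ (h : Removable m (s, i)) :
    resRem v m (s, i) - resAdd v m (s, i + 1) =
      ((m.part s i - m.part s (i + 1) : ℕ) : ZMod e) := by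
  simp only [resRem, resAdd, resNode]
  rw [Nat.cast_sub h.le, Nat.cast_sub (by simp only [Removable] at h; omega)]
  push_cast
  ring

theorem not_below_and_below_succ (q : Pos r) :
    ¬ (Below q (s, i) ∧ Below (s, i + 1) q) := by
  rintro ⟨hq | ⟨hs, hi⟩, hq' | ⟨hs', hi'⟩⟩ <;> simp_all only [lt_asymm, lt_irrefl]
  omega

theorem Normal.natCast_gap_ne_zero {x : ZMod e} (hN : Normal v m (s, i) x) :
    ((m.part s i - m.part s (i + 1) : ℕ) : ZMod e) ≠ 0 := by
  obtain ⟨hRem, hRes, hcount⟩ := hN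
  intro hgap
  have hres : resAdd v m (s, i + 1) = x :=
    hRes ▸ (sub_eq_zero.mp (by rw [resRem_sub_resAdd_succ hRem, hgap])).symm
  have hbetween : {q' : Pos r | Removable m q' ∧ resRem v m q' = x ∧
      Below q' (s, i) ∧ Below (s, i + 1) q'} = ∅ :=
    Set.eq_empty_of_forall_notMem fun q' hq' =>
      not_below_and_below_succ q' ⟨hq'.2.2.1, hq'.2.2.2⟩
  have hmore := hcount (s, i + 1) (addable_succ_of_removable hRem) hres
    (Or.inr ⟨rfl, i.lt_succ_self⟩)
  rw [hbetween, Set.ncard_empty] at hmore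
  exact Nat.not_lt_zero _ hmore

theorem AddNode.gap_eq (h : AddNode l m (s, i)) :
    m.part s i - m.part s (i + 1) = l.part s i - l.part s (i + 1) + 1 := by
  obtain ⟨-, hrow, hnew⟩ := h
  dsimp only at hrow hnew
  have := l.mono s i
  rw [hnew, hrow (i + 1) (by omega)]
  omega

theorem AddNode.gap_le_of_ne {t : Fin r} {j : ℕ} (h : AddNode l m (t, j))
    (hp : (t, j) ≠ (s, i)) :
    m.part s i - m.part s (i + 1) ≤ l.part s i - l.part s (i + 1) := by
  obtain ⟨hother, hrow, hnew⟩ := h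
  dsimp only at hother hrow hnew
  by_cases hs : s = t
  · subst hs
    have hi : i ≠ j := fun hi => hp (by rw [hi])
    rw [hrow i hi]
    by_cases hi' : i + 1 = j
    · subst hi'
      omega
    · rw [hrow (i + 1) hi']
  · rw [hother s hs]

end MultiPartition

theorem kleshchev_components_erestricted_general {r e : ℕ}
    (v : Fin r → ZMod e) (l : MultiPartition r)
    (hK : Kleshchev v l) :
    ∀ s : Fin r, ERestricted e (l.part s) := by
  induction hK with
  | empty l hl =>
    intro s i he
    simp only [hl s, Finsupp.coe_zero, Pi.zero_apply]
    omega
  | step l m p x _ hAdd hGood ih =>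
    intro s i he
    obtain ⟨t, j⟩ := p
    by_cases hp : (t, j) = (s, i)
    · obtain ⟨rfl, rfl⟩ := Prod.mk.inj hp
      have hgap := hAdd.gap_eq
      have hne := hGood.1.natCast_gap_ne_zero
      have hl_gap := ih t j he
      by_contra hge
      have hgap_eq_e : m.part t j - m.part t (j + 1) = e := by omega
      exact hne (by rw [hgap_eq_e, ZMod.natCast_self])
    · exact (hAdd.gap_le_of_ne hp).trans_lt (ih s i he)

/-- each component of a Kleshchev multipartition is `e`-restricted. -/
theorem kleshchev_components_erestricted {r e : ℕ} (he : e = 0 ∨ 2 ≤ e)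
    (v : Fin r → ZMod e) (l : MultiPartition r)
    (hK : Kleshchev v l) :
    ∀ s : Fin r, ERestricted e (l.part s) :=
  kleshchev_components_erestricted_general v l hK
end
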